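/- arXiv:1703.02586 — 4 statements merged into one kernel-verified Lean document; each statement's English description precedes it below -/
import Mathlib

section
/- Let d ≥ 2 and k ≥ 0 be integers. The multiplicity of the d-th cyclotomic polynomial Φ_d in the polynomial [2k]_q!! = ∏_{i=1}^{k} (1 + q + ⋯ + q^{2i−1}), regarded as a polynomial over ℚ, equals ⌊k/d⌋ if d is odd and ⌊2k/d⌋ if d is even. (Equivalently, the φ_d-weight of a Coxeter group of type B_k is ⌊k/d⌋ for d odd and ⌊k/(d/2)⌋ for d even.) -/
/-!
Over `ℚ` the cyclotomic polynomials are irreducible and pairwise coprime, and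
`1 + q + ⋯ + q^{n-1} = ∏_{e ∣ n, e ≠ 1} Φ_e`. Hence for `d ≥ 2` the factor `[n]_q` contributes
exactly one `Φ_d` when `d ∣ n` and none otherwise, so the multiplicity of `Φ_d` in `[2k]_q!!`
is the number of `i ≤ k` with `d ∣ 2i`.
-/

open Polynomial Finset

lemma emultiplicity_cyclotomic_cyclotomic_rat {d e : ℕ} (hd : 0 < d) :
    emultiplicity (cyclotomic d ℚ) (cyclotomic e ℚ) = if e = d then 1 else 0 := by
  have hirr := cyclotomic.irreducible_rat hd
  split_ifs with h
  · subst h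
    exact (FiniteMultiplicity.of_not_isUnit hirr.not_isUnit
      (cyclotomic_ne_zero e ℚ)).emultiplicity_self
  · rw [emultiplicity_eq_zero]
    exact fun hdvd => hirr.not_isUnit <|
      (cyclotomic.isCoprime_rat h).isUnit_of_dvd' hdvd dvd_rfl

lemma emultiplicity_cyclotomic_geom_sum_rat {d n : ℕ} (hd : 1 < d) (hn : 0 < n) :
    emultiplicity (cyclotomic d ℚ) (∑ j ∈ range n, (X : ℚ[X]) ^ j)
      = if d ∣ n then 1 else 0 := by
  rw [← prod_cyclotomic_eq_geom_sum hn ℚ,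
    Finset.emultiplicity_prod (cyclotomic.irreducible_rat (by omega)).prime]
  simp_rw [emultiplicity_cyclotomic_cyclotomic_rat (show 0 < d by omega)]
  rw [Finset.sum_ite_eq']
  simp [hd.ne', hn.ne']

lemma emultiplicity_cyclotomic_prod_geom_sum_rat {ι : Type*} {d : ℕ} (hd : 1 < d)
    (s : Finset ι) {n : ι → ℕ} (hn : ∀ i ∈ s, 0 < n i) :
    emultiplicity (cyclotomic d ℚ) (∏ i ∈ s, ∑ j ∈ range (n i), (X : ℚ[X]) ^ j)
      = #{i ∈ s | d ∣ n i} := by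
  rw [Finset.emultiplicity_prod (cyclotomic.irreducible_rat (by omega)).prime,
    Finset.sum_congr rfl fun i hi => emultiplicity_cyclotomic_geom_sum_rat hd (hn i hi),
    Finset.sum_boole]

lemma card_filter_range_dvd_mul_succ_of_coprime {a d : ℕ} (h : a.Coprime d) (k : ℕ) :
    #{i ∈ range k | d ∣ a * (i + 1)} = k / d := by
  rw [← Nat.card_multiples k d]
  congr 1
  exact filter_congr fun i _ => h.symm.dvd_mul_left

lemma card_filter_range_mul_dvd_mul_succ {a : ℕ} (ha : 0 < a) (m k : ℕ) :
    #{i ∈ range k | a * m ∣ a * (i + 1)} = k / m := by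
  rw [← Nat.card_multiples k m]
  congr 1
  exact filter_congr fun i _ => Nat.mul_dvd_mul_iff_left ha

/--
The multiplicity of the `d`-th cyclotomic polynomial `Φ_d` in
`[2k]_q!! = ∏_{i=1}^{k} (1 + q + ⋯ + q^{2i-1})`, over `ℚ`, equals `⌊k/d⌋` if `d` is odd
and `⌊2k/d⌋` if `d` is even.
-/
theorem cyclotomic_multiplicity_qDoubleFactorial (d k : ℕ) (hd : 2 ≤ d) :
    (Odd d →
      ((Polynomial.cyclotomic d ℚ) ^ (k / d) ∣
          ∏ i ∈ Finset.range k,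
            ∑ j ∈ Finset.range (2 * (i + 1)), (Polynomial.X : Polynomial ℚ) ^ j) ∧
      ¬ ((Polynomial.cyclotomic d ℚ) ^ (k / d + 1) ∣
          ∏ i ∈ Finset.range k,
            ∑ j ∈ Finset.range (2 * (i + 1)), (Polynomial.X : Polynomial ℚ) ^ j)) ∧
    (Even d →
      ((Polynomial.cyclotomic d ℚ) ^ (2 * k / d) ∣
          ∏ i ∈ Finset.range k,
            ∑ j ∈ Finset.range (2 * (i + 1)), (Polynomial.X : Polynomial ℚ) ^ j) ∧
      ¬ ((Polynomial.cyclotomic d ℚ) ^ (2 * k / d + 1) ∣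
          ∏ i ∈ Finset.range k,
            ∑ j ∈ Finset.range (2 * (i + 1)), (Polynomial.X : Polynomial ℚ) ^ j)) := by
  have hmult := emultiplicity_cyclotomic_prod_geom_sum_rat hd (range k)
    (n := fun i => 2 * (i + 1)) fun i _ => by omega
  refine ⟨fun hodd => ?_, fun heven => ?_⟩
  · rw [← emultiplicity_eq_coe, hmult,
      card_filter_range_dvd_mul_succ_of_coprime (Nat.coprime_two_left.mpr hodd)]
  · obtain ⟨m, rfl⟩ := heven.two_dvd
    rw [← emultiplicity_eq_coe, hmult, card_filter_range_mul_dvd_mul_succ two_pos,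
      Nat.mul_div_mul_left _ _ two_pos]
end

section
/- Let d ≥ 2 and n ≥ d − 1 be integers. There exists an acyclic matching M on the family of all subsets of {1, …, n} (including the empty set), ordered by inclusion, which is weighted with respect to v_d, and whose critical elements are exactly the subsets σ ⊆ {1, …, n} of one of the following two forms: (i) every maximal run of consecutive integers in σ has size at most d − 2; or (ii) σ = τ ∪ {n − d + 2, n − d + 3, …, n}, where τ ⊆ {1, …, n − d} and every maximal run of consecutive integers in τ has size at most d − 2. -/
/-- The number of consecutive elements of `σ` ending at `x`
(the position of `x` within its maximal run, `0` if `x ∉ σ`). -/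
def leftRun (σ : Finset ℕ) (x : ℕ) : ℕ :=
  (σ.filter fun y => y ≤ x ∧ Finset.Icc y x ⊆ σ).card

/-- The `φ_d`-weight of type `A`: the sum over the maximal runs of consecutive
integers of `σ`, of sizes `n_1, …, n_m`, of `⌊(n_i + 1)/d⌋`. -/
def vA (d : ℕ) (σ : Finset ℕ) : ℕ :=
  (σ.filter fun x => d ∣ (leftRun σ x + 1)).card

/-- Every maximal run of consecutive integers in `σ` has size at most `r`. -/
def RunsLE (r : ℕ) (σ : Finset ℕ) : Prop :=
  ∀ a : ℕ, ¬ Finset.Icc a (a + r) ⊆ σ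

/-- A matching on a family `P` of finite sets: a set of pairs `(τ, σ)` with
`τ ⊆ σ`, `|σ| = |τ| + 1`, every element of `P` occurring in at most one pair. -/
def IsMatching (P : Set (Finset ℕ)) (M : Set (Finset ℕ × Finset ℕ)) : Prop :=
  (∀ p ∈ M, p.1 ∈ P ∧ p.2 ∈ P ∧ p.1 ⊆ p.2 ∧ p.2.card = p.1.card + 1) ∧
  (∀ p ∈ M, ∀ q ∈ M, p ≠ q → p.1 ≠ q.1 ∧ p.1 ≠ q.2 ∧ p.2 ≠ q.1 ∧ p.2 ≠ q.2)

/-- An element of `P` is critical for `M` if it occurs in no pair of `M`. -/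
def IsCritical (P : Set (Finset ℕ)) (M : Set (Finset ℕ × Finset ℕ))
    (σ : Finset ℕ) : Prop :=
  σ ∈ P ∧ ∀ p ∈ M, p.1 ≠ σ ∧ p.2 ≠ σ

/-- Acyclicity of a matching: there is no closed alternating path
`σ_0 ⊳ τ_1 ⊲ σ_1 ⊳ τ_2 ⊲ ⋯ ⊳ τ_m ⊲ σ_m = σ_0` with `m ≥ 2`. -/
def IsAcyclic (M : Set (Finset ℕ × Finset ℕ)) : Prop :=
  ¬ ∃ (m : ℕ) (σs τs : ℕ → Finset ℕ), 2 ≤ m ∧ σs m = σs 0 ∧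
      ∀ i, 1 ≤ i → i ≤ m →
        (τs i, σs i) ∈ M ∧ τs i ⊆ σs (i - 1) ∧
        (σs (i - 1)).card = (τs i).card + 1 ∧ (τs i, σs (i - 1)) ∉ M

/-- A matching is weighted w.r.t. a weight function `v` if matched pairs have
equal weight. -/
def IsWeighted (v : Finset ℕ → ℕ) (M : Set (Finset ℕ × Finset ℕ)) : Prop :=
  ∀ p ∈ M, v p.1 = v p.2

/-- The only alternating path from the critical cell `σ` down to the critical
cell `τ` is the trivial one (`m = 0`, i.e. the single covering `σ ⊃ τ`). -/
def OnlyTrivialAltPath (M : Set (Finset ℕ × Finset ℕ)) (σ τ : Finset ℕ) : Prop :=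
  ∀ (m : ℕ) (σs τs : ℕ → Finset ℕ),
    σs 0 = σ →
    (∀ i, 1 ≤ i → i ≤ m →
      (τs i, σs i) ∈ M ∧ τs i ⊆ σs (i - 1) ∧
      (σs (i - 1)).card = (τs i).card + 1 ∧ (τs i, σs (i - 1)) ∉ M) →
    τ ⊆ σs m → (σs m).card = τ.card + 1 → m = 0

/-!
Write `d = k + 2`. The matching pairs a set `σ ⊆ {1, …, n}` with `σ △ {a + k + 1}`, where
`{a, …, a + k}` is the leftmost run of `k + 1 = d - 1` consecutive elements of `σ`; toggling
`a + k + 1` does not move that leftmost run. Inserting `a + k + 1` merges the run, of size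
exactly `d - 1` since `a - 1 ∉ σ`, with the run following it, which shifts the positions in
the latter by `d` and gives the new element position `d`; so `v_d` is unchanged. The sets left
unmatched are those without such a run, or whose leftmost one ends at `n`.
In an alternating step `σ' ⊳ τ ⊲ σ` with `σ = τ ∪ {a + k + 1}` matched, `σ' = τ ∪ {y}` with
`y < a`: otherwise `{a, …, a + k}` would also be the leftmost run of `σ'`, which lacks
`a + k + 1`, so `σ'` would be matched with a larger set, not a smaller one as on a closed
alternating path. Hence `σ'` precedes `σ` in colex order, and alternating paths cannot close up.
-/

open Finset

section LeftRun

variable {σ τ : Finset ℕ} {a x z : ℕ}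

lemma leftRun_eq_of_Icc_subset (ha : 0 < a) (hprev : a - 1 ∉ σ) (haz : a ≤ z + 1)
    (hrun : Icc a z ⊆ σ) : leftRun σ z = z + 1 - a := by
  have hfilter : σ.filter (fun y => y ≤ z ∧ Icc y z ⊆ σ) = Icc a z := by
    ext y
    simp only [mem_filter, mem_Icc]
    constructor
    · rintro ⟨-, hyz, hy⟩
      by_contra! hya
      exact hprev (hy (mem_Icc.mpr ⟨by omega, by omega⟩))
    · rintro ⟨hay, hyz⟩
      exact ⟨hrun (mem_Icc.mpr ⟨hay, hyz⟩), hyz, (Icc_subset_Icc_left hay).trans hrun⟩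
  rw [leftRun, hfilter, Nat.card_Icc]

lemma leftRun_insert_of_not_Icc_subset (h : ¬ (x ≤ z ∧ Icc x z ⊆ insert x τ)) :
    leftRun (insert x τ) z = leftRun τ z := by
  unfold leftRun
  rw [filter_insert, if_neg h]
  congr 1
  refine filter_congr fun y _ => and_congr_right fun hyz => ⟨fun hy w hw => ?_,
    fun hy => hy.trans (subset_insert x τ)⟩
  obtain rfl | hwx := eq_or_ne w x
  · exact absurd ⟨(mem_Icc.mp hw).2, (Icc_subset_Icc_left (mem_Icc.mp hw).1).trans hy⟩ h
  · exact (mem_insert.mp (hy hw)).resolve_left hwx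

lemma vA_insert_of_maximal_run {k : ℕ} (ha : 0 < a) (hprev : a - 1 ∉ τ)
    (hrun : Icc a (a + k) ⊆ τ) (hx : a + k + 1 ∉ τ) :
    vA (k + 2) (insert (a + k + 1) τ) = vA (k + 2) τ := by
  have hprev' : a - 1 ∉ insert (a + k + 1) τ := by
    rw [mem_insert, not_or]
    exact ⟨by omega, hprev⟩
  have hrun' {z : ℕ} (hz : Icc (a + k + 1) z ⊆ insert (a + k + 1) τ) :
      Icc a z ⊆ insert (a + k + 1) τ := fun w hw => by
    by_cases hwk : w ≤ a + k
    · exact mem_insert_of_mem (hrun (mem_Icc.mpr ⟨(mem_Icc.mp hw).1, hwk⟩))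
    · exact hz (mem_Icc.mpr ⟨by omega, (mem_Icc.mp hw).2⟩)
  unfold vA
  rw [filter_insert, if_neg]
  · congr 1
    refine filter_congr fun z hz => ?_
    by_cases hmerge : a + k + 1 ≤ z ∧ Icc (a + k + 1) z ⊆ insert (a + k + 1) τ
    · have hxz : a + k + 1 < z := lt_of_le_of_ne hmerge.1 fun h => hx (h ▸ hz)
      have htail : Icc (a + k + 2) z ⊆ τ := fun w hw => by
        have hw' := mem_Icc.mp hw
        exact (mem_insert.mp (hmerge.2 (mem_Icc.mpr ⟨by omega, hw'.2⟩))).resolve_left (by omega)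
      rw [leftRun_eq_of_Icc_subset ha hprev' (by omega) (hrun' hmerge.2),
        leftRun_eq_of_Icc_subset (a := a + k + 2) (by omega) hx (by omega) htail,
        show z + 1 - a + 1 = z + 1 - (a + k + 2) + 1 + (k + 2) by omega, Nat.dvd_add_self_right]
    · rw [leftRun_insert_of_not_Icc_subset hmerge]
  · rw [leftRun_eq_of_Icc_subset ha hprev' (by omega) (hrun' (by simp)),
      show a + k + 1 + 1 - a + 1 = (k + 2) + 1 by omega, Nat.dvd_add_self_left, Nat.dvd_one]
    omega

end LeftRun

section Acyclic

variable {M : Set (Finset ℕ × Finset ℕ)}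

lemma isAcyclic_of_forall_lt {α : Type*} [Preorder α] (f : Finset ℕ → α)
    (hf : ∀ τ σ ρ σ', (τ, σ) ∈ M → (ρ, σ') ∈ M → τ ⊆ σ' → σ'.card = τ.card + 1 →
      (τ, σ') ∉ M → f σ' < f σ) :
    IsAcyclic M := by
  rintro ⟨m, σs, τs, hm, hcycle, hstep⟩
  have hmono : StrictMonoOn (f ∘ σs) (Set.Iic m) := by
    refine strictMonoOn_Iic_of_lt_succ fun j hj => ?_
    obtain ⟨hjM, hsub, hcard, hnot⟩ := hstep (j + 1) (by omega) hj
    have hupper : ∃ ρ, (ρ, σs j) ∈ M := by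
      rcases j with _ | j
      · exact ⟨τs m, hcycle ▸ (hstep m (by omega) le_rfl).1⟩
      · exact ⟨τs (j + 1), (hstep (j + 1) (by omega) hj.le).1⟩
    obtain ⟨ρ, hρ⟩ := hupper
    exact hf _ _ _ _ hjM hρ hsub hcard hnot
  have hlt := hmono (Set.mem_Iic.mpr (Nat.zero_le m)) Set.self_mem_Iic (by omega : 0 < m)
  simp only [Function.comp_apply, hcycle] at hlt
  exact lt_irrefl _ hlt

end Acyclic

def HasRun (k : ℕ) (σ : Finset ℕ) (a : ℕ) : Prop :=
  Icc a (a + k) ⊆ σ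

def FirstRun (k : ℕ) (σ : Finset ℕ) (a : ℕ) : Prop :=
  HasRun k σ a ∧ ∀ b < a, ¬ HasRun k σ b

namespace FirstRun

variable {k a b y : ℕ} {σ : Finset ℕ}

lemma unique (ha : FirstRun k σ a) (hb : FirstRun k σ b) : a = b := by
  by_contra! hne
  rcases hne.lt_or_gt with h | h
  · exact hb.2 a h ha.1
  · exact ha.2 b h hb.1

lemma exists_of_not_runsLE (h : ¬ RunsLE k σ) : ∃ a, FirstRun k σ a := by
  classical
  have hex : ∃ a, HasRun k σ a := by simpa [RunsLE, HasRun] using h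
  exact ⟨Nat.find hex, Nat.find_spec hex, fun b hb => Nat.find_min hex hb⟩

lemma insert (h : FirstRun k σ a) (hy : a + k < y) : FirstRun k (insert y σ) a :=
  ⟨h.1.trans (subset_insert y σ), fun b hb hrun => h.2 b hb fun w hw =>
    (mem_insert.mp (hrun hw)).resolve_left (by have := (mem_Icc.mp hw).2; omega)⟩

lemma erase (h : FirstRun k σ a) (hy : a + k < y) : FirstRun k (σ.erase y) a :=
  ⟨fun w hw => mem_erase.mpr ⟨by have := (mem_Icc.mp hw).2; omega, h.1 hw⟩,
    fun b hb hrun => h.2 b hb (hrun.trans (erase_subset y σ))⟩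

lemma mem (h : FirstRun k σ a) : a ∈ σ :=
  h.1 (left_mem_Icc.mpr (Nat.le_add_right a k))

lemma end_mem (h : FirstRun k σ a) : a + k ∈ σ :=
  h.1 (right_mem_Icc.mpr (Nat.le_add_right a k))

lemma sub_one_notMem (h : FirstRun k σ a) (ha : 0 < a) : a - 1 ∉ σ := fun hmem =>
  h.2 (a - 1) (by omega) fun w hw => by
    obtain rfl | hw' := eq_or_ne w (a - 1)
    · exact hmem
    · exact h.1 (mem_Icc.mpr ⟨by have := (mem_Icc.mp hw).1; omega, by
        have := (mem_Icc.mp hw).2; omega⟩)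

end FirstRun

def runMatching (k n : ℕ) : Set (Finset ℕ × Finset ℕ) :=
  { p | ∃ a, p.2 ⊆ Icc 1 n ∧ FirstRun k p.2 a ∧ a + k + 1 ∈ p.2 ∧ p.1 = p.2.erase (a + k + 1) }

namespace runMatching

variable {k n : ℕ} {p q : Finset ℕ × Finset ℕ} {σ : Finset ℕ}

lemma fst_ne_snd (hp : p ∈ runMatching k n) (hq : q ∈ runMatching k n) : p.1 ≠ q.2 := by
  obtain ⟨a, -, ha, -, hp1⟩ := hp
  obtain ⟨b, -, hb, hbx, -⟩ := hq
  intro h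
  have hab : a = b := (hp1 ▸ ha.erase (by omega)).unique (h ▸ hb)
  rw [← h, hp1, hab] at hbx
  exact notMem_erase _ _ hbx

lemma eq_of_fst_eq (hp : p ∈ runMatching k n) (hq : q ∈ runMatching k n) (h : p.1 = q.1) :
    p = q := by
  obtain ⟨a, -, ha, hax, hp1⟩ := hp
  obtain ⟨b, -, hb, hbx, hq1⟩ := hq
  have hab : a = b := (hp1 ▸ ha.erase (by omega)).unique (h ▸ hq1 ▸ hb.erase (by omega))
  subst hab
  refine Prod.ext h ?_
  rw [← insert_erase hax, ← insert_erase hbx, ← hp1, ← hq1, h]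

lemma eq_of_snd_eq (hp : p ∈ runMatching k n) (hq : q ∈ runMatching k n) (h : p.2 = q.2) :
    p = q := by
  obtain ⟨a, -, ha, -, hp1⟩ := hp
  obtain ⟨b, -, hb, -, hq1⟩ := hq
  have hab : a = b := ha.unique (h ▸ hb)
  exact Prod.ext (by rw [hp1, hq1, h, hab]) h

lemma isMatching : IsMatching {σ | σ ⊆ Icc 1 n} (runMatching k n) := by
  refine ⟨fun p hp => ?_, fun p hp q hq hne => ?_⟩
  · obtain ⟨a, hsub, -, hx, hp1⟩ := hp
    rw [hp1]
    exact ⟨(erase_subset _ _).trans hsub, hsub, erase_subset _ _, (card_erase_add_one hx).symm⟩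
  · exact ⟨fun h => hne (eq_of_fst_eq hp hq h), fst_ne_snd hp hq,
      fun h => fst_ne_snd hq hp h.symm, fun h => hne (eq_of_snd_eq hp hq h)⟩

lemma isWeighted : IsWeighted (vA (k + 2)) (runMatching k n) := by
  rintro p ⟨a, hsub, ha, hx, hp1⟩
  have ha0 : 0 < a := (mem_Icc.mp (hsub ha.mem)).1
  rw [hp1, ← vA_insert_of_maximal_run ha0 ((ha.erase (by omega)).sub_one_notMem ha0)
    (ha.erase (by omega)).1 (notMem_erase _ _), insert_erase hx]

lemma toColex_lt_of_alternating {τ σ ρ σ' : Finset ℕ} (hτσ : (τ, σ) ∈ runMatching k n)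
    (hρσ' : (ρ, σ') ∈ runMatching k n) (hsub : τ ⊆ σ') (hcard : σ'.card = τ.card + 1)
    (hne : σ' ≠ σ) : toColex σ' < toColex σ := by
  obtain ⟨a, -, ha, hx, hτ⟩ := hτσ
  obtain ⟨b, -, hb, hbx, -⟩ := hρσ'
  dsimp only at ha hx hτ hb hbx
  obtain ⟨y, hy, rfl⟩ := exists_eq_insert_iff.mpr ⟨hsub, hcard.symm⟩
  have hτa : FirstRun k τ a := hτ ▸ ha.erase (by omega)
  have hxτ : a + k + 1 ∉ τ := hτ ▸ notMem_erase _ _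
  have hyx : y ≠ a + k + 1 := fun h => hne (by rw [h, hτ, insert_erase hx])
  have hya : y < a := by
    by_contra! hay
    have hyk : a + k < y := by
      by_contra!
      exact hy (hτa.1 (mem_Icc.mpr ⟨hay, this⟩))
    have hab : a = b := (hτa.insert hyk).unique hb
    rcases mem_insert.mp hbx with h | h
    · exact hyx (by omega)
    · exact hxτ (hab ▸ h)
  rw [← insert_erase hx, ← hτ]
  exact (Colex.insert_lt_insert hy hxτ).mpr (by omega)

lemma isAcyclic : IsAcyclic (runMatching k n) :=
  isAcyclic_of_forall_lt toColex fun _ _ _ _ hτσ hρσ' hsub hcard hnot =>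
    toColex_lt_of_alternating hτσ hρσ' hsub hcard fun h => hnot (h ▸ hτσ)

lemma isCritical_iff_forall_firstRun (hσ : σ ⊆ Icc 1 n) :
    IsCritical {σ | σ ⊆ Icc 1 n} (runMatching k n) σ ↔ ∀ a, FirstRun k σ a → n < a + k + 1 := by
  constructor
  · rintro ⟨-, hcrit⟩ a ha
    by_contra! hxn
    by_cases hx : a + k + 1 ∈ σ
    · exact (hcrit (σ.erase (a + k + 1), σ) ⟨a, hσ, ha, hx, rfl⟩).2 rfl
    · refine (hcrit (σ, insert (a + k + 1) σ) ⟨a, ?_, ha.insert (by omega), mem_insert_self _ _,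
        (erase_insert hx).symm⟩).1 rfl
      exact insert_subset (mem_Icc.mpr ⟨by omega, hxn⟩) hσ
  · refine fun hcrit => ⟨hσ, fun p ⟨a, hsub, ha, hx, hp1⟩ => ⟨fun h => ?_, fun h => ?_⟩⟩
    · have := hcrit a (h ▸ hp1 ▸ ha.erase (by omega))
      have := (mem_Icc.mp (hsub hx)).2
      omega
    · have := hcrit a (h ▸ ha)
      have := (mem_Icc.mp (hsub hx)).2
      omega

end runMatching

section Critical

variable {k n : ℕ} {σ τ : Finset ℕ}

lemma firstRun_union_Icc (hkn : k < n) (hτ : τ ⊆ Icc 1 (n - (k + 2))) (hτk : RunsLE k τ) :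
    FirstRun k (τ ∪ Icc (n - k) n) (n - k) := by
  refine ⟨fun w hw => mem_union_right _ (mem_Icc.mpr ⟨(mem_Icc.mp hw).1, by
    have := (mem_Icc.mp hw).2; omega⟩), fun b hb hrun => ?_⟩
  have hgap : n - k - 1 ∉ τ ∪ Icc (n - k) n := by
    rw [mem_union, not_or]
    exact ⟨fun h => by have := mem_Icc.mp (hτ h); omega, fun h => by have := mem_Icc.mp h; omega⟩
  by_cases hb' : n - k - 1 ∈ Icc b (b + k)
  · exact hgap (hrun hb')
  · refine hτk b fun w hw => (mem_union.mp (hrun hw)).resolve_right fun h => hb' ?_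
    have := mem_Icc.mp hw
    have := mem_Icc.mp h
    exact mem_Icc.mpr ⟨by omega, by omega⟩

lemma FirstRun.exists_eq_union_Icc (hσ : σ ⊆ Icc 1 n) (h : FirstRun k σ (n - k))
    (hkn : k < n) :
    ∃ τ : Finset ℕ, τ ⊆ Icc 1 (n - (k + 2)) ∧ RunsLE k τ ∧ σ = τ ∪ Icc (n - k) n := by
  have hgap := h.sub_one_notMem (by omega)
  refine ⟨σ \ Icc (n - k) n, fun z hz => ?_, fun b hb => ?_, ?_⟩
  · obtain ⟨hzσ, hz⟩ := mem_sdiff.mp hz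
    have := mem_Icc.mp (hσ hzσ)
    have hz' : z ≠ n - k - 1 := fun h => hgap (h ▸ hzσ)
    exact mem_Icc.mpr ⟨this.1, by rw [mem_Icc] at hz; omega⟩
  · have hbk := (mem_sdiff.mp (hb (right_mem_Icc.mpr (Nat.le_add_right b k))))
    have := mem_Icc.mp (hσ hbk.1)
    exact h.2 b (by rw [mem_Icc] at hbk; omega) (hb.trans sdiff_subset)
  · refine (sdiff_union_of_subset fun w hw => h.1 (mem_Icc.mpr ?_)).symm
    have := mem_Icc.mp hw
    omega

lemma runMatching.isCritical_iff (hσ : σ ⊆ Icc 1 n) :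
    IsCritical {σ | σ ⊆ Icc 1 n} (runMatching k n) σ ↔
      (RunsLE k σ ∨ ∃ τ : Finset ℕ, τ ⊆ Icc 1 (n - (k + 2)) ∧ RunsLE k τ ∧
        σ = τ ∪ Icc (n - k) n) := by
  rw [runMatching.isCritical_iff_forall_firstRun hσ]
  constructor
  · intro hcrit
    by_cases hruns : RunsLE k σ
    · exact Or.inl hruns
    obtain ⟨a, ha⟩ := FirstRun.exists_of_not_runsLE hruns
    have hend := (mem_Icc.mp (hσ ha.end_mem)).2
    have ha0 := (mem_Icc.mp (hσ ha.mem)).1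
    have han : a = n - k := by have := hcrit a ha; omega
    exact Or.inr ((han ▸ ha).exists_eq_union_Icc hσ (by omega))
  · rintro (hruns | ⟨τ, hτ, hτk, rfl⟩) a ha
    · exact absurd ha.1 (hruns a)
    · have hkn := (mem_Icc.mp (hσ (mem_union_right τ (left_mem_Icc.mpr (Nat.sub_le n k))))).1
      have := (firstRun_union_Icc (by omega) hτ hτk).unique ha
      omega

end Critical

theorem exists_weighted_acyclic_matching_typeA_general (d n : ℕ) (hd : 2 ≤ d) :
    ∃ M : Set (Finset ℕ × Finset ℕ),
      IsMatching {σ | σ ⊆ Finset.Icc 1 n} M ∧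
      IsAcyclic M ∧
      IsWeighted (vA d) M ∧
      ∀ σ : Finset ℕ, σ ⊆ Finset.Icc 1 n →
        (IsCritical {σ | σ ⊆ Finset.Icc 1 n} M σ ↔
          (RunsLE (d - 2) σ ∨
            ∃ τ : Finset ℕ, τ ⊆ Finset.Icc 1 (n - d) ∧ RunsLE (d - 2) τ ∧
              σ = τ ∪ Finset.Icc (n + 2 - d) n)) := by
  obtain ⟨k, rfl⟩ : ∃ k, d = k + 2 := ⟨d - 2, by omega⟩
  refine ⟨runMatching k n, runMatching.isMatching, runMatching.isAcyclic,
    runMatching.isWeighted, fun σ hσ => ?_⟩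
  rw [Nat.add_sub_cancel, Nat.add_sub_add_right]
  exact runMatching.isCritical_iff hσ

/--
For `d ≥ 2` and `n ≥ d - 1` there is an acyclic matching on the family of all
subsets of `{1, …, n}`, weighted with respect to `v_d`, whose critical elements
are exactly: (i) the subsets all of whose maximal runs have size at most `d - 2`,
and (ii) the subsets of the form `τ ∪ {n-d+2, …, n}` with `τ ⊆ {1, …, n-d}`
all of whose maximal runs have size at most `d - 2`.
-/
theorem exists_weighted_acyclic_matching_typeA (d n : ℕ) (hd : 2 ≤ d) (hn : d - 1 ≤ n) :
    ∃ M : Set (Finset ℕ × Finset ℕ),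
      IsMatching {σ | σ ⊆ Finset.Icc 1 n} M ∧
      IsAcyclic M ∧
      IsWeighted (vA d) M ∧
      ∀ σ : Finset ℕ, σ ⊆ Finset.Icc 1 n →
        (IsCritical {σ | σ ⊆ Finset.Icc 1 n} M σ ↔
          (RunsLE (d - 2) σ ∨
            ∃ τ : Finset ℕ, τ ⊆ Finset.Icc 1 (n - d) ∧ RunsLE (d - 2) τ ∧
              σ = τ ∪ Finset.Icc (n + 2 - d) n)) :=
  exists_weighted_acyclic_matching_typeA_general d n hd
end

section
/- Let n ≥ 0 and d ≥ 2 be integers. Then ∑ (−1)^{|σ|}, the sum ranging over all subsets σ ⊆ {1, …, n} (including the empty set) all of whose maximal runs of consecutive integers have size at most d − 2, equals (−1)^{kd} if n = kd or n = kd − 1 for some integer k ≥ 0, and equals 0 otherwise. (This is the reduced Euler characteristic computation for the independence complex Ind_{d−2}(A_n), which is homotopy equivalent to a sphere when n ≡ 0 or −1 mod d and contractible otherwise.) -/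
open Finset

namespace RunsLE

variable {r : ℕ} {s t : Finset ℕ}

theorem mono (ht : RunsLE r t) (hst : s ⊆ t) : RunsLE r s :=
  fun a ha => ht a (ha.trans hst)

theorem of_card_le (hs : #s ≤ r) : RunsLE r s := fun a ha => by
  have := card_le_card ha
  rw [Nat.card_Icc] at this
  omega

theorem union {g : ℕ} (hs : RunsLE r s) (ht : RunsLE r t) (hsg : ∀ x ∈ s, x < g)
    (htg : ∀ x ∈ t, g < x) : RunsLE r (s ∪ t) := by
  intro a ha
  have hg : g ∉ s ∪ t := fun h => by
    rcases mem_union.mp h with h | h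
    · exact (hsg g h).false
    · exact (htg g h).false
  by_cases hlo : a ≤ g
  · by_cases hhi : g ≤ a + r
    · exact hg (ha (mem_Icc.mpr ⟨hlo, hhi⟩))
    refine hs a fun x hx => ?_
    rcases mem_union.mp (ha hx) with h | h
    · exact h
    · have := htg x h; have := mem_Icc.mp hx; omega
  · refine ht a fun x hx => ?_
    rcases mem_union.mp (ha hx) with h | h
    · have := hsg x h; have := mem_Icc.mp hx; omega
    · exact h

open Classical in
noncomputable def family (r n : ℕ) : Finset (Finset ℕ) :=
  (Icc 1 n).powerset.filter (RunsLE r)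

noncomputable def altSum (r n : ℕ) : ℤ :=
  ∑ σ ∈ family r n, (-1) ^ #σ

noncomputable def altSumIoc (r n m : ℕ) : ℤ :=
  ∑ σ ∈ (family r n).filter (Ioc m n ⊆ ·), (-1) ^ #σ

theorem mem_family {n : ℕ} : s ∈ family r n ↔ s ⊆ Icc 1 n ∧ RunsLE r s := by
  simp [family]

theorem altSum_zero (r : ℕ) : altSum r 0 = 1 := by
  have : family r 0 = {∅} := by
    ext s
    simp only [mem_family, Icc_eq_empty_of_lt zero_lt_one, subset_empty, mem_singleton,
      and_iff_left_iff_imp]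
    rintro rfl
    exact of_card_le (by simp)
  simp [altSum, this]

theorem altSum_eq_zero {n : ℕ} (hn : 0 < n) (hnr : n ≤ r) : altSum r n = 0 := by
  have : family r n = (Icc 1 n).powerset := by
    ext s
    simp only [mem_family, mem_powerset, and_iff_left_iff_imp]
    intro hs
    refine of_card_le ((card_le_card hs).trans ?_)
    simpa using hnr
  rw [altSum, this]
  exact sum_powerset_neg_one_pow_card_of_nonempty (nonempty_Icc.mpr hn)

theorem altSumIoc_self (r n : ℕ) : altSumIoc r n n = altSum r n := by
  simp [altSumIoc, altSum]

theorem altSumIoc_eq_zero (r m : ℕ) : altSumIoc r (m + r + 1) m = 0 := by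
  refine sum_eq_zero fun s hs => ?_
  obtain ⟨hs, hIoc⟩ := mem_filter.mp hs
  refine ((mem_family.mp hs).2 (m + 1) ?_).elim
  rwa [Icc_add_one_left_eq_Ioc, add_right_comm]

/-- Cutting off the top block `(m + 1, m + 1 + j]` is a bijection onto `family r m` from the
sets of `family r (m + 1 + j)` that contain this block and miss `m + 1`. -/
theorem sum_filter_Ioc_subset_filter_notMem {m j : ℕ} (hj : j ≤ r) :
    ∑ σ ∈ ((family r (m + 1 + j)).filter (Ioc (m + 1) (m + 1 + j) ⊆ ·)).filter (m + 1 ∉ ·),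
      (-1 : ℤ) ^ #σ = (-1) ^ j * altSum r m := by
  set B := Ioc (m + 1) (m + 1 + j)
  have hdisj : ∀ τ ∈ family r m, Disjoint τ B := fun τ hτ =>
    disjoint_left.mpr fun x hxτ hxB => by
      have := mem_Icc.mp ((mem_family.mp hτ).1 hxτ); have := mem_Ioc.mp hxB; omega
  rw [altSum, mul_sum]
  symm
  refine sum_nbij' (· ∪ B) (· \ B) (fun τ hτ => ?_) (fun σ hσ => ?_)
    (fun τ hτ => union_sdiff_cancel_right (hdisj τ hτ))
    (fun σ hσ => sdiff_union_of_subset (mem_filter.mp (mem_filter.mp hσ).1).2)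
    (fun τ hτ => by rw [card_union_of_disjoint (hdisj τ hτ), pow_add, mul_comm]; simp [B])
  · obtain ⟨hτsub, hτ⟩ := mem_family.mp hτ
    simp only [mem_filter, mem_family]
    refine ⟨⟨⟨union_subset (hτsub.trans (Icc_subset_Icc_right (by omega))) ?_,
      hτ.union (of_card_le (by simpa [B] using hj)) (g := m + 1) ?_ ?_⟩, subset_union_right⟩, ?_⟩
    · exact fun x hx => by have := mem_Ioc.mp hx; simp; omega
    · exact fun x hx => by have := mem_Icc.mp (hτsub hx); omega
    · exact fun x hx => by have := mem_Ioc.mp hx; omega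
    · intro h
      rcases mem_union.mp h with h | h
      · have := mem_Icc.mp (hτsub h); omega
      · have := mem_Ioc.mp h; omega
  · simp only [mem_filter, mem_family] at hσ ⊢
    obtain ⟨⟨⟨hσsub, hσ⟩, -⟩, hm⟩ := hσ
    refine ⟨fun x hx => ?_, hσ.mono sdiff_subset⟩
    obtain ⟨hxσ, hxB⟩ := mem_sdiff.mp hx
    have := mem_Icc.mp (hσsub hxσ)
    have : x ≠ m + 1 := fun h => hm (h ▸ hxσ)
    simp only [B, mem_Ioc, not_and, not_le] at hxB
    simp only [mem_Icc]
    omega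

theorem altSumIoc_succ {m j : ℕ} (hj : j ≤ r) :
    altSumIoc r (m + 1 + j) (m + 1) = (-1) ^ j * altSum r m + altSumIoc r (m + 1 + j) m := by
  have hIoc : ∀ σ : Finset ℕ,
      Ioc m (m + 1 + j) ⊆ σ ↔ Ioc (m + 1) (m + 1 + j) ⊆ σ ∧ m + 1 ∈ σ := fun σ => by
    rw [← Icc_add_one_left_eq_Ioc, ← Ioc_insert_left (by omega), insert_subset_iff, and_comm]
  rw [altSumIoc, ← sum_filter_not_add_sum_filter _ (m + 1 ∈ ·),
    sum_filter_Ioc_subset_filter_notMem hj, altSumIoc, filter_filter]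
  simp only [hIoc]

theorem altSum_eq_sum_add_altSumIoc {j : ℕ} (hj : j ≤ r + 1) (m : ℕ) :
    altSum r (m + j) =
      ∑ i ∈ range j, (-1) ^ i * altSum r (m + j - 1 - i) + altSumIoc r (m + j) m := by
  induction j generalizing m with
  | zero => simp [altSumIoc_self]
  | succ j ih =>
    rw [show m + (j + 1) = m + 1 + j by omega, ih (by omega) (m + 1),
      altSumIoc_succ (by omega), sum_range_succ, show m + 1 + j - 1 - j = m by omega]
    ring

theorem altSum_recurrence (r m : ℕ) :
    altSum r (m + r + 1) = ∑ i ∈ range (r + 1), (-1) ^ i * altSum r (m + r - i) := by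
  simpa [altSumIoc_eq_zero, ← add_assoc] using
    altSum_eq_sum_add_altSumIoc (le_refl (r + 1)) m

theorem altSum_self_add_one (r : ℕ) : altSum r (r + 1) = (-1) ^ r := by
  have := altSum_recurrence r 0
  rw [sum_range_succ, sum_eq_zero fun i hi => ?_] at this
  · simpa [altSum_zero] using this
  · rw [altSum_eq_zero (by simp at hi ⊢; omega) (by omega), mul_zero]

/-- Subtracting the recurrences at `m + 1` and at `m` telescopes all but one term. -/
theorem altSum_add_period (r m : ℕ) : altSum r (m + (r + 2)) = (-1) ^ r * altSum r m := by
  have h₁ := altSum_recurrence r (m + 1)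
  have h₀ := altSum_recurrence r m
  rw [sum_range_succ'] at h₁
  rw [sum_range_succ] at h₀
  simp only [pow_succ, show ∀ i, m + 1 + r - (i + 1) = m + r - i by omega,
    Nat.add_sub_cancel] at h₁ h₀
  rw [show m + (r + 2) = m + 1 + r + 1 by omega, h₁]
  simp only [mul_neg_one, neg_mul, sum_neg_distrib, pow_zero, one_mul,
    show m + 1 + r - 0 = m + r + 1 by omega, h₀]
  ring

theorem altSum_add_mul_period (r m q : ℕ) :
    altSum r (m + q * (r + 2)) = (-1) ^ (q * r) * altSum r m := by
  induction q with
  | zero => simp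
  | succ q ih =>
    rw [add_mul, one_mul, ← add_assoc, altSum_add_period, ih, add_mul, one_mul, pow_add]
    ring

end RunsLE

open RunsLE in
open Classical in
/--
The signed count `∑ (-1)^{|σ|}` over all subsets `σ ⊆ {1, …, n}` all of whose
maximal runs of consecutive integers have size at most `d - 2` equals
`(-1)^{kd}` if `n = kd` or `n = kd - 1` for some `k ≥ 0`, and `0` otherwise.
-/
theorem euler_char_independence_complex (n d : ℕ) (hd : 2 ≤ d) :
    (∀ k : ℕ, (n = k * d ∨ n + 1 = k * d) →
      ∑ σ ∈ (Finset.Icc 1 n).powerset.filter (RunsLE (d - 2)),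
        (-1 : ℤ) ^ σ.card = (-1 : ℤ) ^ (k * d)) ∧
    ((¬ ∃ k : ℕ, n = k * d ∨ n + 1 = k * d) →
      ∑ σ ∈ (Finset.Icc 1 n).powerset.filter (RunsLE (d - 2)),
        (-1 : ℤ) ^ σ.card = 0) := by
  obtain ⟨r, rfl⟩ : ∃ r, d = r + 2 := ⟨d - 2, by omega⟩
  change (∀ k, _ → altSum r n = _) ∧ (_ → altSum r n = 0)
  have hsign : ∀ k : ℕ, (-1 : ℤ) ^ (k * (r + 2)) = (-1) ^ (k * r) := fun k => by
    rw [mul_add, pow_add, (even_two.mul_left k).neg_one_pow, mul_one]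
  refine ⟨fun k hk => ?_, fun hno => ?_⟩
  · rcases hk with rfl | hk
    · simpa [altSum_zero, hsign] using altSum_add_mul_period r 0 k
    obtain ⟨k, rfl⟩ : ∃ k', k = k' + 1 := ⟨k - 1, by cases k <;> simp_all⟩
    rw [show n = r + 1 + k * (r + 2) by linarith, altSum_add_mul_period, altSum_self_add_one,
      hsign, ← pow_add, add_one_mul]
  · have hmod₀ : n % (r + 2) ≠ 0 := fun h =>
      hno ⟨n / (r + 2), .inl (Nat.div_mul_cancel (Nat.dvd_of_mod_eq_zero h)).symm⟩
    have hmod₁ : n % (r + 2) ≠ r + 1 := fun h => hno ⟨n / (r + 2) + 1, .inr (by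
      have := Nat.mod_add_div' n (r + 2); rw [h] at this; linarith)⟩
    rw [← Nat.mod_add_div' n (r + 2), altSum_add_mul_period,
      altSum_eq_zero (by omega) (by have := Nat.mod_lt n (show 0 < r + 2 by omega); omega), mul_zero]
end

section
/- Let d ≥ 2 be an integer and let σ ⊆ τ be finite sets of positive integers. Then v_d(σ) ≤ v_d(τ). (This is the monotonicity of the φ_d-weight underlying the weighted sheaf of type A: enlarging a simplex can only increase the multiplicity of the d-th cyclotomic polynomial in the Poincaré polynomial of the associated parabolic subgroup.) -/
/-! Within a run, `vA d` counts the elements at positions `d - 1, 2d - 1, …`. Send such an element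
`x` of `σ` to the nearest counted element of `τ` at or below `x`: it exists because the position
of `x` in `τ` is at least its position in `σ`, and it lies less than `d` below `x`. Counted
elements of `σ` are at least `d` apart, so this map is injective. -/

theorem leftRun_pos_iff {σ : Finset ℕ} {x : ℕ} : 0 < leftRun σ x ↔ x ∈ σ := by
  rw [leftRun, Finset.card_pos]
  constructor
  · rintro ⟨y, hy⟩
    obtain ⟨-, hyx, hsub⟩ := Finset.mem_filter.1 hy
    exact hsub (Finset.mem_Icc.2 ⟨hyx, le_rfl⟩)
  · intro hx
    exact ⟨x, Finset.mem_filter.2 ⟨hx, le_rfl, by simpa using hx⟩⟩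

theorem leftRun_le_add_one (σ : Finset ℕ) (x : ℕ) : leftRun σ x ≤ x + 1 := by
  rw [leftRun, ← Nat.card_Iic]
  exact Finset.card_le_card fun y hy => Finset.mem_Iic.2 (Finset.mem_filter.1 hy).2.1

theorem leftRun_mono {σ τ : Finset ℕ} (h : σ ⊆ τ) (x : ℕ) : leftRun σ x ≤ leftRun τ x :=
  Finset.card_le_card fun _ hy =>
    let ⟨hyσ, hyx, hsub⟩ := Finset.mem_filter.1 hy
    Finset.mem_filter.2 ⟨h hyσ, hyx, hsub.trans h⟩

theorem leftRun_succ (σ : Finset ℕ) (x : ℕ) :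
    leftRun σ (x + 1) = if x + 1 ∈ σ then leftRun σ x + 1 else 0 := by
  split_ifs with hx
  · rw [leftRun, leftRun, ← Finset.card_insert_of_notMem (s := σ.filter _)
      (by simp : x + 1 ∉ σ.filter fun y => y ≤ x ∧ Finset.Icc y x ⊆ σ)]
    congr 1
    ext y
    simp only [Finset.mem_filter, Finset.mem_insert]
    constructor
    · rintro ⟨hyσ, hyx, hsub⟩
      rcases hyx.eq_or_lt with rfl | hlt
      · exact Or.inl rfl
      · refine Or.inr ⟨hyσ, Nat.le_of_lt_succ hlt, fun z hz => hsub ?_⟩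
        simp only [Finset.mem_Icc] at hz ⊢
        omega
    · rintro (rfl | ⟨hyσ, hyx, hsub⟩)
      · exact ⟨hx, le_rfl, by simpa using hx⟩
      · refine ⟨hyσ, by omega, ?_⟩
        rw [← Finset.insert_Icc_right_eq_Icc_add_one (by omega)]
        exact Finset.insert_subset hx hsub
  · rw [← Nat.le_zero, ← not_lt, leftRun_pos_iff]
    exact hx

theorem leftRun_add_of_le {σ : Finset ℕ} {y k : ℕ} (h : k ≤ leftRun σ (y + k)) :
    leftRun σ (y + k) = leftRun σ y + k := by
  induction k with
  | zero => rfl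
  | succ k ih =>
    have hmem : y + k + 1 ∈ σ := leftRun_pos_iff.1 (by rw [add_assoc]; omega)
    rw [← add_assoc, leftRun_succ, if_pos hmem] at h ⊢
    rw [ih (by omega), add_assoc]

theorem leftRun_sub_of_lt {σ : Finset ℕ} {x k : ℕ} (h : k < leftRun σ x) :
    leftRun σ (x - k) = leftRun σ x - k := by
  have hkx : k ≤ x := by have := leftRun_le_add_one σ x; omega
  have := leftRun_add_of_le (σ := σ) (y := x - k) (k := k)
    (by rw [Nat.sub_add_cancel hkx]; omega)
  rw [Nat.sub_add_cancel hkx] at this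
  omega

theorem add_le_of_dvd_leftRun_add_one {σ : Finset ℕ} {d x y : ℕ} (hxy : x < y)
    (hx : d ∣ leftRun σ x + 1) (hy : d ∣ leftRun σ y + 1) : x + d ≤ y := by
  by_contra! hlt
  obtain ⟨k, rfl⟩ := Nat.exists_eq_add_of_lt hxy
  rw [add_assoc] at hy hlt
  -- `x` and `y` are then in the same run, at positions differing by `k + 1 < d`.
  have hdy : d ≤ leftRun σ (x + (k + 1)) + 1 := Nat.le_of_dvd (Nat.succ_pos _) hy
  rw [leftRun_add_of_le (by omega), add_right_comm] at hy
  have := Nat.le_of_dvd (Nat.succ_pos k) ((Nat.dvd_add_right hx).1 hy)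
  omega

theorem add_one_mod_lt_of_dvd {d m n : ℕ} (hd : d ∣ m + 1) (hm : 0 < m) (hmn : m ≤ n) :
    (n + 1) % d < n := by
  have hd0 : 0 < d := Nat.pos_of_dvd_of_pos hd (Nat.succ_pos m)
  have hdm : d ≤ m + 1 := Nat.le_of_dvd (Nat.succ_pos m) hd
  rcases (show d ≤ n + 1 by omega).eq_or_lt with h | h
  · rw [← h, Nat.mod_self]
    omega
  · have := Nat.mod_lt (n + 1) hd0
    omega

theorem sub_mod_mem_and_dvd_leftRun_add_one {σ τ : Finset ℕ} {d x : ℕ} (hστ : σ ⊆ τ)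
    (hx : x ∈ σ) (hdx : d ∣ leftRun σ x + 1) :
    x - (leftRun τ x + 1) % d ∈ τ ∧ d ∣ leftRun τ (x - (leftRun τ x + 1) % d) + 1 := by
  have hlt := add_one_mod_lt_of_dvd hdx (leftRun_pos_iff.2 hx) (leftRun_mono hστ x)
  rw [← leftRun_pos_iff, leftRun_sub_of_lt hlt]
  refine ⟨by omega, ?_⟩
  rw [← Nat.sub_add_comm hlt.le]
  exact Nat.dvd_sub_mod _

theorem injOn_of_separated {s : Set ℕ} {f : ℕ → ℕ} {d : ℕ}
    (hs : ∀ x ∈ s, ∀ y ∈ s, x < y → x + d ≤ y) (hf : ∀ x ∈ s, f x ≤ x ∧ x < f x + d) :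
    s.InjOn f := by
  intro x hx y hy hfxy
  have := hf x hx
  have := hf y hy
  rcases lt_trichotomy x y with h | h | h
  · have := hs x hx y hy h
    omega
  · exact h
  · have := hs y hy x hx h
    omega

theorem vA_mono_general (d : ℕ) (σ τ : Finset ℕ) (hστ : σ ⊆ τ) :
    vA d σ ≤ vA d τ := by
  refine Finset.card_le_card_of_injOn (fun x => x - (leftRun τ x + 1) % d) ?_ ?_
  · intro x hx
    obtain ⟨hxσ, hdx⟩ := Finset.mem_filter.1 hx
    exact Finset.mem_filter.2 (sub_mod_mem_and_dvd_leftRun_add_one hστ hxσ hdx)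
  · refine injOn_of_separated (d := d) ?_ ?_
    · intro x hx y hy hxy
      exact add_le_of_dvd_leftRun_add_one hxy (Finset.mem_filter.1 hx).2
        (Finset.mem_filter.1 hy).2
    · intro x hx
      have hd : 0 < d := Nat.pos_of_dvd_of_pos (Finset.mem_filter.1 hx).2 (Nat.succ_pos _)
      have := Nat.mod_lt (leftRun τ x + 1) hd
      omega

/--
Monotonicity of the type-`A` weight `v_d`: if `σ ⊆ τ` are finite sets of
positive integers, then `v_d σ ≤ v_d τ`.
-/
theorem vA_mono (d : ℕ) (hd : 2 ≤ d) (σ τ : Finset ℕ)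
    (hpos : ∀ x ∈ τ, 0 < x) (hστ : σ ⊆ τ) :
    vA d σ ≤ vA d τ :=
  vA_mono_general d σ τ hστ
end
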